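/- arXiv:1403.1121 — 3 statements merged into one kernel-verified Lean document; each statement's English description precedes it below -/
import Mathlib

section
/- Let G be a Hermitian operator on (C²)^⊗n commuting with the cyclic translation operator T, with common orthonormal eigenbasis {|ψ_k⟩ : k = 1,...,2^n} of G and T. Let 2l < n and for each k let ρ_{k,A} be the partial trace of |ψ_k⟩⟨ψ_k| over qubits l+1,...,n. Then 1/2^l ≤ 2^(-n) Σ_{k=1}^{2^n} Tr(ρ_{k,A}²) ≤ 1/2^l + 2^l/n. -/
open Matrix Finset
noncomputable section

/-- The Pauli matrices, with `pauli 0` the identity. -/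
def pauli : Fin 4 → Matrix (Fin 2) (Fin 2) ℂ :=
  ![1, !![0, 1; 1, 0], !![0, -Complex.I; Complex.I, 0], !![1, 0; 0, -1]]

/-- Tensor product `σ^(a 0) ⊗ ⋯ ⊗ σ^(a (l-1))` of Pauli matrices on `l` qubits. -/
def pauliTensor (l : ℕ) (a : Fin l → Fin 4) :
    Matrix (Fin l → Fin 2) (Fin l → Fin 2) ℂ :=
  fun x y => ∏ i, pauli (a i) (x i) (y i)

/-- Cyclic successor on `Fin n`. -/
def cycSucc {n : ℕ} (i : Fin n) : Fin n := ⟨(i.1 + 1) % n, Nat.mod_lt _ i.pos⟩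

/-- The Pauli matrix `σ^(a)` acting on qubit `j` of an `n`-qubit chain. -/
def pauliAt (n : ℕ) (j : Fin n) (a : Fin 4) :
    Matrix (Fin n → Fin 2) (Fin n → Fin 2) ℂ :=
  fun x y => ∏ i, if i = j then pauli a (x i) (y i) else (if x i = y i then 1 else 0)

/-- `σ^(a 0)_1 ⋯ σ^(a (l-1))_l` acting on the first `l` qubits of an `n`-qubit chain. -/
def pauliBlock (n l : ℕ) (a : Fin l → Fin 4) :
    Matrix (Fin n → Fin 2) (Fin n → Fin 2) ℂ :=
  fun x y => ∏ i, if h : i.1 < l then pauli (a ⟨i.1, h⟩) (x i) (y i)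
    else (if x i = y i then 1 else 0)

/-- The cyclic translation operator `T` on `n` qubits. -/
def transOp (n : ℕ) : Matrix (Fin n → Fin 2) (Fin n → Fin 2) ℂ :=
  fun x y => if ∀ i, y i = x (cycSucc i) then 1 else 0

/-- Combine a configuration of the first `l` qubits with one of the last `n - l`. -/
def glue (n l : ℕ) (u : Fin l → Fin 2) (w : Fin (n - l) → Fin 2) : Fin n → Fin 2 :=
  fun i => if h : i.1 < l then u ⟨i.1, h⟩ else w ⟨i.1 - l, by have := i.isLt; omega⟩

/-- Reduced density matrix of the pure state `ψ` on the first `l` qubits. -/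
def redDM (n l : ℕ) (ψ : (Fin n → Fin 2) → ℂ) :
    Matrix (Fin l → Fin 2) (Fin l → Fin 2) ℂ :=
  fun u v => ∑ w, ψ (glue n l u w) * (starRingEnd ℂ) (ψ (glue n l v w))

open ComplexConjugate

/-!
Expanding in the Pauli basis, `Tr ρ² = 2^{-l} Σ_a |Tr(σ^a ρ)|²`, and for a reduced density
matrix `Tr(σ^a ρ_{k,A}) = ⟨ψ_k| σ^a ⊗ 1 |ψ_k⟩`. The identity string `a = 0` contributes `1` for
every `k`, which is the lower bound. For `a ≠ 0`, each `ψ_k` is a translation eigenvector, so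
`⟨ψ_k| σ^a ⊗ 1 |ψ_k⟩ = ⟨ψ_k|M|ψ_k⟩ / n` where `M` is the sum of the `n` translates of the Pauli
string. Because `2l < n` these translates are pairwise distinct, hence Hilbert–Schmidt
orthogonal, so `Tr(M M†) = n 2^n`; and for an orthonormal basis
`Σ_k |⟨ψ_k|M|ψ_k⟩|² ≤ Tr(M M†)`. Hence `Σ_k |⟨ψ_k| σ^a ⊗ 1 |ψ_k⟩|² ≤ 2^n / n` for each of
the fewer than `4^l` nontrivial strings.
-/

lemma trace_mul_conjTranspose {X : Type*} [Fintype X] (A B : Matrix X X ℂ) :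
    trace (A * Bᴴ) = ∑ x, ∑ y, A x y * conj (B x y) := by
  simp [trace, mul_apply]

lemma re_trace_mul_conjTranspose_self {X : Type*} [Fintype X] (A : Matrix X X ℂ) :
    (trace (A * Aᴴ)).re = ∑ x, ∑ y, Complex.normSq (A x y) := by
  simp [trace_mul_conjTranspose, Complex.mul_conj, Complex.re_sum]

lemma prod_ite_eq_ite_forall {ι M : Type*} [Fintype ι] [CommMonoidWithZero M] (p : ι → Prop)
    [DecidablePred p] [Decidable (∀ i, p i)] (c : M) :
    ∏ i, (if p i then c else 0) = if ∀ i, p i then c ^ Fintype.card ι else 0 := by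
  split_ifs with h
  · simp [h]
  · obtain ⟨i, hi⟩ := not_forall.mp h
    exact prod_eq_zero (mem_univ i) (if_neg hi)

lemma sum_sum_prod_eq_prod_sum_sum {ι S R : Type*} [Fintype ι] [DecidableEq ι] [Fintype S]
    [CommSemiring R] (f : ι → S → S → R) :
    ∑ x : ι → S, ∑ y : ι → S, ∏ i, f i (x i) (y i) = ∏ i, ∑ u, ∑ v, f i u v := by
  simp only [Fintype.prod_sum]

lemma sum_normSq_sum_mul_of_orthogonal_columns {Λ P : Type*} [Fintype Λ] [Fintype P]
    [DecidableEq P] (β : Λ → P → ℂ) (c : ℝ)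
    (hβ : ∀ p q, ∑ a, β a p * conj (β a q) = if p = q then (c : ℂ) else 0) (v : P → ℂ) :
    ∑ a, Complex.normSq (∑ p, β a p * v p) = c * ∑ p, Complex.normSq (v p) := by
  apply Complex.ofReal_injective
  push_cast
  simp only [← Complex.mul_conj, map_sum, map_mul, sum_mul_sum]
  calc ∑ a, ∑ p, ∑ q, β a p * v p * (conj (β a q) * conj (v q))
      = ∑ p, ∑ q, (∑ a, β a p * conj (β a q)) * (v p * conj (v q)) := by
        rw [sum_comm]
        refine sum_congr rfl fun p _ => ?_
        rw [sum_comm]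
        refine sum_congr rfl fun q _ => ?_
        rw [sum_mul]
        exact sum_congr rfl fun a _ => by ring
    _ = c * ∑ p, v p * conj (v p) := by simp [hβ, mul_sum]

lemma sum_normSq_dotProduct_mulVec_le {X K : Type*} [Fintype X] [DecidableEq X] [Fintype K]
    [DecidableEq K] (hcard : Fintype.card X = Fintype.card K) (ψ : K → X → ℂ)
    (horth : ∀ j k, star (ψ j) ⬝ᵥ ψ k = if j = k then 1 else 0) (M : Matrix X X ℂ) :
    ∑ k, Complex.normSq (star (ψ k) ⬝ᵥ (M *ᵥ ψ k)) ≤ (trace (M * Mᴴ)).re := by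
  set U : Matrix X K ℂ := Matrix.of fun x k => ψ k x
  have hUU : U * Uᴴ = 1 := by
    refine (mul_eq_one_comm_of_equiv (Fintype.equivOfCardEq hcard)).mpr ?_
    ext j k
    simpa [U, mul_apply, one_apply, dotProduct, mul_comm] using horth j k
  set D := Uᴴ * M * U
  have hdiag : ∀ k, D k k = star (ψ k) ⬝ᵥ (M *ᵥ ψ k) := by
    intro k
    simp only [D, mul_apply, dotProduct, mulVec, sum_mul, mul_sum]
    rw [sum_comm]
    simp [U, mul_assoc]
  have htrace : trace (D * Dᴴ) = trace (M * Mᴴ) := by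
    simp only [D, conjTranspose_mul, conjTranspose_conjTranspose, Matrix.mul_assoc]
    rw [trace_mul_comm, ← Matrix.mul_assoc U, hUU, Matrix.one_mul, Matrix.mul_assoc,
      Matrix.mul_assoc, hUU, Matrix.mul_one]
  rw [← htrace, re_trace_mul_conjTranspose_self, sum_comm]
  simp only [← hdiag]
  exact sum_le_sum fun k _ => single_le_sum (f := fun j => Complex.normSq (D j k))
    (fun j _ => Complex.normSq_nonneg _) (mem_univ k)

lemma dotProduct_submatrix_mulVec_of_comp_eq_smul {X : Type*} [Fintype X] [DecidableEq X]
    {ψ : X → ℂ} {σ : X ≃ X} {μ : ℂ} (hσ : ψ ∘ σ = μ • ψ) (hψ : star ψ ⬝ᵥ ψ = 1)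
    (A : Matrix X X ℂ) :
    star ψ ⬝ᵥ (A.submatrix σ σ *ᵥ ψ) = star ψ ⬝ᵥ (A *ᵥ ψ) := by
  have hreindex : ∀ B : Matrix X X ℂ,
      conj μ * μ * (star ψ ⬝ᵥ (B.submatrix σ σ *ᵥ ψ)) = star ψ ⬝ᵥ (B *ᵥ ψ) := by
    intro B
    calc conj μ * μ * (star ψ ⬝ᵥ (B.submatrix σ σ *ᵥ ψ))
        = star (ψ ∘ σ) ⬝ᵥ (B.submatrix σ σ *ᵥ (ψ ∘ σ)) := by
          rw [hσ, star_smul, mulVec_smul, smul_dotProduct, dotProduct_smul]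
          simp only [smul_eq_mul, RCLike.star_def]
          ring
      _ = star ψ ∘ σ ⬝ᵥ (B *ᵥ ψ) ∘ σ := by
          rw [submatrix_mulVec_equiv, Function.comp_assoc, σ.self_comp_symm]
          rfl
      _ = star ψ ⬝ᵥ (B *ᵥ ψ) := comp_equiv_dotProduct_comp_equiv _ _ _
  have hμ : conj μ * μ = 1 := by simpa [hψ] using hreindex 1
  rw [← hreindex A, hμ, one_mul]

lemma le_sum_and_sum_le_add_card_mul {ι : Type*} [Fintype ι] [DecidableEq ι] {F : ι → ℝ}
    {i₀ : ι} {B : ℝ} (hF : ∀ i, 0 ≤ F i) (hB : ∀ i ≠ i₀, F i ≤ B) (hB₀ : 0 ≤ B) :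
    F i₀ ≤ ∑ i, F i ∧ ∑ i, F i ≤ F i₀ + Fintype.card ι * B := by
  rw [← add_sum_erase _ _ (mem_univ i₀)]
  refine ⟨le_add_of_nonneg_right (sum_nonneg fun i _ => hF i), add_le_add le_rfl ?_⟩
  calc ∑ i ∈ univ.erase i₀, F i ≤ ∑ i ∈ univ.erase i₀, B :=
        sum_le_sum fun i hi => hB i (ne_of_mem_erase hi)
    _ ≤ ∑ _i : ι, B := sum_le_sum_of_subset_of_nonneg (erase_subset _ _) fun _ _ _ => hB₀
    _ = Fintype.card ι * B := by simp

lemma Fin.eq_zero_of_periodic_of_support_lt {α : Type*} [Zero α] {n l : ℕ} [NeZero n]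
    (hln : 2 * l < n) {b : Fin n → α} (hb : ∀ j : Fin n, l ≤ j.val → b j = 0) {d : Fin n}
    (hd : d ≠ 0) (hper : Function.Periodic b d) : b = 0 := by
  classical
  by_contra hne
  have hsupp : (univ.filter fun j => b j ≠ 0).Nonempty := by
    obtain ⟨j, hj⟩ := Function.ne_iff.mp hne
    exact ⟨j, by simpa using hj⟩
  set m := (univ.filter fun j => b j ≠ 0).max' hsupp
  have hm : b m ≠ 0 := by simpa using max'_mem _ hsupp
  have hmax : ∀ j, b j ≠ 0 → j ≤ m := fun j hj => le_max' _ j (by simpa using hj)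
  have hml : m.val < l := by
    by_contra h
    exact hm (hb m (by omega))
  have hd0 : 0 < d.val := Fin.pos_iff_ne_zero.mpr hd
  -- `m` is the largest site of the support, yet `m + d` and `m - d` lie in it too: both must
  -- wrap around, forcing `n ≤ m + d ≤ 2m < 2l`.
  have hplus : (m.val + d.val) % n ≤ m.val := by
    rw [← Fin.val_add, ← Fin.le_def]
    exact hmax _ (by rwa [hper])
  have hminus : (n - d.val + m.val) % n ≤ m.val := by
    rw [← Fin.val_sub, ← Fin.le_def]
    exact hmax _ (by rwa [← hper (m - d), sub_add_cancel])
  have hwrap_plus : n ≤ m.val + d.val := by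
    by_contra h
    rw [Nat.mod_eq_of_lt (by omega)] at hplus
    omega
  have hwrap_minus : d.val ≤ m.val := by
    by_contra h
    rw [Nat.mod_eq_of_lt (by omega)] at hminus
    omega
  omega

lemma pauli_zero : pauli 0 = 1 := rfl

lemma trace_pauli_mul_conjTranspose (b c : Fin 4) :
    trace (pauli b * (pauli c)ᴴ) = if b = c then 2 else 0 := by
  rw [trace_mul_conjTranspose]
  fin_cases b <;> fin_cases c <;>
    simp [pauli, Fin.sum_univ_two, Matrix.one_apply] <;> norm_num [Complex.ext_iff]

lemma pauli_completeness (x y x' y' : Fin 2) :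
    ∑ a, pauli a x y * conj (pauli a x' y') = if x = x' ∧ y = y' then 2 else 0 := by
  fin_cases x <;> fin_cases y <;> fin_cases x' <;> fin_cases y' <;>
    simp [pauli, Fin.sum_univ_four] <;> norm_num [Complex.ext_iff]

lemma pauliTensor_apply (l : ℕ) (a : Fin l → Fin 4) (x y : Fin l → Fin 2) :
    pauliTensor l a x y = ∏ i, pauli (a i) (x i) (y i) := rfl

lemma trace_pauliTensor_mul_conjTranspose (l : ℕ) (a b : Fin l → Fin 4) :
    trace (pauliTensor l a * (pauliTensor l b)ᴴ) = if a = b then 2 ^ l else 0 := by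
  simp only [trace_mul_conjTranspose, pauliTensor_apply, map_prod, ← prod_mul_distrib]
  rw [sum_sum_prod_eq_prod_sum_sum fun i u v => pauli (a i) u v * conj (pauli (b i) u v)]
  simp only [← trace_mul_conjTranspose, trace_pauli_mul_conjTranspose]
  simp [prod_ite_eq_ite_forall, funext_iff]

lemma pauliTensor_completeness (l : ℕ) (x y x' y' : Fin l → Fin 2) :
    ∑ a, pauliTensor l a x y * conj (pauliTensor l a x' y')
      = if x = x' ∧ y = y' then 2 ^ l else 0 := by
  simp only [pauliTensor_apply, map_prod, ← prod_mul_distrib]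
  rw [← Fintype.prod_sum fun i c => pauli c (x i) (y i) * conj (pauli c (x' i) (y' i))]
  simp [pauli_completeness, prod_ite_eq_ite_forall, funext_iff, forall_and]

lemma sum_normSq_trace_pauliTensor_mul (l : ℕ) (M : Matrix (Fin l → Fin 2) (Fin l → Fin 2) ℂ) :
    ∑ a, Complex.normSq (trace (pauliTensor l a * M)) = 2 ^ l * (trace (M * Mᴴ)).re := by
  have htrace : ∀ a, trace (pauliTensor l a * M) = ∑ p : (Fin l → Fin 2) × (Fin l → Fin 2),
      pauliTensor l a p.1 p.2 * Mᵀ p.1 p.2 := fun a => by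
    simp [trace, mul_apply, Fintype.sum_prod_type]
  simp only [htrace]
  rw [sum_normSq_sum_mul_of_orthogonal_columns _ (2 ^ l) (fun p q => by
      simpa [Prod.ext_iff] using pauliTensor_completeness l p.1 p.2 q.1 q.2),
    re_trace_mul_conjTranspose_self, sum_comm]
  simp [Fintype.sum_prod_type]

section Glue

variable {n l : ℕ}

def glueSites (hl : l ≤ n) : Fin l ⊕ Fin (n - l) ≃ Fin n :=
  finSumFinEquiv.trans (finCongr (by omega))

@[simp]
lemma glueSites_inl_val (hl : l ≤ n) (i : Fin l) : (glueSites hl (.inl i)).val = i.val := rfl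

@[simp]
lemma glueSites_inr_val (hl : l ≤ n) (j : Fin (n - l)) :
    (glueSites hl (.inr j)).val = l + j.val := rfl

@[simp]
lemma glue_glueSites_inl (hl : l ≤ n) (u : Fin l → Fin 2) (w : Fin (n - l) → Fin 2)
    (i : Fin l) : glue n l u w (glueSites hl (.inl i)) = u i := by
  simp [glue, glueSites]

@[simp]
lemma glue_glueSites_inr (hl : l ≤ n) (u : Fin l → Fin 2) (w : Fin (n - l) → Fin 2)
    (j : Fin (n - l)) : glue n l u w (glueSites hl (.inr j)) = w j := by
  simp [glue, glueSites]

def glueEquiv (hl : l ≤ n) : (Fin l → Fin 2) × (Fin (n - l) → Fin 2) ≃ (Fin n → Fin 2) :=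
  (Equiv.sumArrowEquivProdArrow _ _ _).symm.trans ((glueSites hl).arrowCongr (Equiv.refl _))

lemma glueEquiv_apply (hl : l ≤ n) (p : (Fin l → Fin 2) × (Fin (n - l) → Fin 2)) :
    glueEquiv hl p = glue n l p.1 p.2 := by
  funext i
  obtain ⟨s, rfl⟩ := (glueSites hl).surjective i
  cases s <;> simp [glueEquiv] <;> rfl

lemma sum_eq_sum_glue {M : Type*} [AddCommMonoid M] (hl : l ≤ n) (F : (Fin n → Fin 2) → M) :
    ∑ x, F x = ∑ u, ∑ w, F (glue n l u w) := by
  rw [← (glueEquiv hl).sum_comp, Fintype.sum_prod_type]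
  simp only [glueEquiv_apply]

lemma trace_mul_redDM (hl : l ≤ n) (ψ : (Fin n → Fin 2) → ℂ)
    (A : Matrix (Fin l → Fin 2) (Fin l → Fin 2) ℂ) (B : Matrix (Fin n → Fin 2) (Fin n → Fin 2) ℂ)
    (hB : ∀ u v w w', B (glue n l u w) (glue n l v w') = A u v * if w = w' then 1 else 0) :
    trace (A * redDM n l ψ) = star ψ ⬝ᵥ (B *ᵥ ψ) := by
  have hrow : ∀ u w, (B *ᵥ ψ) (glue n l u w) = ∑ v, A u v * ψ (glue n l v w) := by
    intro u w
    simp [mulVec, dotProduct, sum_eq_sum_glue hl fun y => B _ y * ψ y, hB]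
  simp only [dotProduct, Pi.star_apply, RCLike.star_def, sum_eq_sum_glue hl fun x =>
    conj (ψ x) * (B *ᵥ ψ) x, hrow, trace, Matrix.diag, mul_apply, redDM, mul_sum]
  refine sum_congr rfl fun u _ => ?_
  rw [sum_comm]
  exact sum_congr rfl fun v _ => sum_congr rfl fun w _ => by ring

lemma pauliBlock_glue (hl : l ≤ n) (a : Fin l → Fin 4) (u v : Fin l → Fin 2)
    (w w' : Fin (n - l) → Fin 2) :
    pauliBlock n l a (glue n l u w) (glue n l v w')
      = pauliTensor l a u v * if w = w' then 1 else 0 := by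
  rw [pauliBlock, ← (glueSites hl).prod_comp, Fintype.prod_sum_type]
  simp [pauliTensor_apply, prod_ite_eq_ite_forall, funext_iff]

end Glue

lemma redDM_isHermitian (n l : ℕ) (ψ : (Fin n → Fin 2) → ℂ) : (redDM n l ψ).IsHermitian := by
  ext u v
  simp [redDM, mul_comm]

lemma re_trace_redDM_mul_self {n l : ℕ} (hl : l ≤ n) (ψ : (Fin n → Fin 2) → ℂ) :
    (trace (redDM n l ψ * redDM n l ψ)).re
      = ((2 : ℝ) ^ l)⁻¹ * ∑ a, Complex.normSq (star ψ ⬝ᵥ (pauliBlock n l a *ᵥ ψ)) := by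
  simp only [← trace_mul_redDM hl ψ _ _ (pauliBlock_glue hl _), sum_normSq_trace_pauliTensor_mul]
  rw [(redDM_isHermitian n l ψ).eq]
  field_simp

section Translation

variable {G S : Type*} [AddGroup G]

def shiftConfig (c : G) : Equiv.Perm (G → S) where
  toFun x i := x (i + c)
  invFun x i := x (i - c)
  left_inv x := by simp
  right_inv x := by simp

@[simp]
lemma shiftConfig_apply (c : G) (x : G → S) (i : G) :
    shiftConfig c x i = x (i + c) := rfl

@[simp]
lemma shiftConfig_zero : shiftConfig (S := S) (0 : G) = 1 := by
  ext x i
  simp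

lemma shiftConfig_add (c d : G) :
    shiftConfig (S := S) (c + d) = shiftConfig c * shiftConfig d := by
  ext x i
  simp [add_assoc]

lemma dotProduct_submatrix_shiftConfig_mulVec {n : ℕ} [NeZero n] [Fintype S] [DecidableEq S]
    {ψ : (Fin n → S) → ℂ} {μ : ℂ} (hψ1 : ψ ∘ shiftConfig 1 = μ • ψ)
    (hψ : star ψ ⬝ᵥ ψ = 1) (A : Matrix (Fin n → S) (Fin n → S) ℂ) (c : Fin n) :
    star ψ ⬝ᵥ (A.submatrix (shiftConfig c) (shiftConfig c) *ᵥ ψ) = star ψ ⬝ᵥ (A *ᵥ ψ) := by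
  obtain ⟨m, rfl⟩ : ∃ m, n = m + 1 := Nat.exists_eq_succ_of_ne_zero (NeZero.ne n)
  induction c using Fin.induction with
  | zero => simp
  | succ i ih =>
    rw [← Fin.coeSucc_eq_succ, shiftConfig_add, Equiv.Perm.coe_mul, ← submatrix_submatrix,
      dotProduct_submatrix_mulVec_of_comp_eq_smul hψ1 hψ, ih]

end Translation

lemma cycSucc_eq_add_one {n : ℕ} [NeZero n] (i : Fin n) : cycSucc i = i + 1 := by
  ext
  simp [cycSucc, Fin.val_add]

lemma transOp_mulVec {n : ℕ} [NeZero n] (ψ : (Fin n → Fin 2) → ℂ) :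
    transOp n *ᵥ ψ = ψ ∘ shiftConfig 1 := by
  ext x
  have hy : ∀ y : Fin n → Fin 2, (∀ i, y i = x (cycSucc i)) ↔ y = shiftConfig 1 x := by
    simp [funext_iff, cycSucc_eq_add_one]
  simp [mulVec, dotProduct, transOp, hy]

def padPauli (n : ℕ) {l : ℕ} (a : Fin l → Fin 4) : Fin n → Fin 4 :=
  fun i => if h : i.val < l then a ⟨i.val, h⟩ else 0

lemma pauliBlock_eq_pauliTensor (n l : ℕ) (a : Fin l → Fin 4) :
    pauliBlock n l a = pauliTensor n (padPauli n a) := by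
  ext x y
  refine prod_congr rfl fun i _ => ?_
  by_cases h : i.val < l <;> simp [h, padPauli, pauli_zero, one_apply]

lemma pauliBlock_zero (n l : ℕ) : pauliBlock n l 0 = 1 := by
  ext x y
  simp [pauliBlock, pauli_zero, one_apply, prod_ite_eq_ite_forall, funext_iff]

lemma pauliTensor_submatrix_shiftConfig {n : ℕ} [NeZero n] (b : Fin n → Fin 4) (c : Fin n) :
    (pauliTensor n b).submatrix (shiftConfig c) (shiftConfig c)
      = pauliTensor n fun j => b (j - c) := by
  ext x y
  exact Fintype.prod_equiv (Equiv.addRight c) _ _ fun i => by simp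

lemma padPauli_sub_injective {n l : ℕ} [NeZero n] (hln : 2 * l < n) {a : Fin l → Fin 4}
    (ha : a ≠ 0) {c e : Fin n}
    (h : (fun j => padPauli n a (j - c)) = fun j => padPauli n a (j - e)) : c = e := by
  by_contra hce
  have hzero : padPauli n a = 0 := by
    refine Fin.eq_zero_of_periodic_of_support_lt hln (fun j hj => ?_) (sub_ne_zero.mpr hce)
      fun j => ?_
    · simp [padPauli, not_lt.mpr hj]
    · simpa [add_sub_assoc] using (congrFun h (j + c)).symm
  exact ha (funext fun i => by simpa [padPauli] using congrFun hzero ⟨i, by omega⟩)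

lemma sum_normSq_expectation_pauliBlock_le {n l : ℕ} [NeZero n] (hln : 2 * l < n)
    {K : Type*} [Fintype K] [DecidableEq K] (hcard : Fintype.card (Fin n → Fin 2) = Fintype.card K)
    (ψ : K → (Fin n → Fin 2) → ℂ) (horth : ∀ j k, star (ψ j) ⬝ᵥ ψ k = if j = k then 1 else 0)
    (mu : K → ℂ) (heigT : ∀ k, transOp n *ᵥ ψ k = mu k • ψ k) {a : Fin l → Fin 4} (ha : a ≠ 0) :
    ∑ k, Complex.normSq (star (ψ k) ⬝ᵥ (pauliBlock n l a *ᵥ ψ k)) ≤ 2 ^ n / n := by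
  set P : Fin n → Matrix (Fin n → Fin 2) (Fin n → Fin 2) ℂ :=
    fun c => pauliTensor n fun j => padPauli n a (j - c)
  set M := ∑ c, P c
  have hexp : ∀ k, star (ψ k) ⬝ᵥ (M *ᵥ ψ k) = n * star (ψ k) ⬝ᵥ (pauliBlock n l a *ᵥ ψ k) := by
    intro k
    have hnorm : star (ψ k) ⬝ᵥ ψ k = 1 := by simpa using horth k k
    have hshift : ψ k ∘ shiftConfig 1 = mu k • ψ k := by rw [← transOp_mulVec, heigT]
    simp only [M, P, sum_mulVec, dotProduct_sum, ← pauliTensor_submatrix_shiftConfig,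
      ← pauliBlock_eq_pauliTensor, dotProduct_submatrix_shiftConfig_mulVec hshift hnorm]
    simp
  have htrace : (trace (M * Mᴴ)).re = n * 2 ^ n := by
    have hdistinct : ∀ c e : Fin n,
        ((fun j => padPauli n a (j - c)) = fun j => padPauli n a (j - e)) ↔ c = e := fun c e => ⟨padPauli_sub_injective hln ha, fun h => h ▸ rfl⟩
    have hre : ((2 : ℂ) ^ n).re = 2 ^ n := mod_cast Complex.ofReal_re (2 ^ n)
    simp [M, P, conjTranspose_sum, sum_mul, mul_sum, trace_sum,
      trace_pauliTensor_mul_conjTranspose, hdistinct, hre]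
  have hbound := sum_normSq_dotProduct_mulVec_le hcard ψ horth M
  simp only [htrace, hexp, Complex.normSq_mul, Complex.normSq_natCast, ← mul_sum] at hbound
  have hn : (0 : ℝ) < n := by exact_mod_cast Nat.pos_of_ne_zero (NeZero.ne n)
  rw [le_div_iff₀ hn]
  nlinarith [sum_nonneg fun k (_ : k ∈ univ) =>
    Complex.normSq_nonneg (star (ψ k) ⬝ᵥ (pauliBlock n l a *ᵥ ψ k))]

theorem average_purity_translation_invariant_general (n l : ℕ) (hln : 2 * l < n)
    (ψ : Fin (2 ^ n) → ((Fin n → Fin 2) → ℂ))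
    (horth : ∀ j k, star (ψ j) ⬝ᵥ ψ k = if j = k then 1 else 0)
    (mu : Fin (2 ^ n) → ℂ)
    (heigT : ∀ k, transOp n *ᵥ ψ k = mu k • ψ k) :
    (1 : ℝ) / 2 ^ l ≤
        ((2 : ℝ) ^ n)⁻¹ *
          ∑ k, (Matrix.trace (redDM n l (ψ k) * redDM n l (ψ k))).re ∧
      ((2 : ℝ) ^ n)⁻¹ *
          ∑ k, (Matrix.trace (redDM n l (ψ k) * redDM n l (ψ k))).re ≤
        1 / 2 ^ l + 2 ^ l / n := by
  have : NeZero n := ⟨by omega⟩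
  have hn : (0 : ℝ) < n := by exact_mod_cast Nat.pos_of_ne_zero (NeZero.ne n)
  set F : (Fin l → Fin 4) → ℝ :=
    fun a => ∑ k, Complex.normSq (star (ψ k) ⬝ᵥ (pauliBlock n l a *ᵥ ψ k))
  have hpurity : ∑ k, (trace (redDM n l (ψ k) * redDM n l (ψ k))).re
      = ((2 : ℝ) ^ l)⁻¹ * ∑ a, F a := by
    simp only [F, re_trace_redDM_mul_self (by omega : l ≤ n), ← mul_sum]
    rw [sum_comm]
  have hF0 : F 0 = 2 ^ n := by simp [F, pauliBlock_zero, horth]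
  obtain ⟨hlower, hupper⟩ := le_sum_and_sum_le_add_card_mul (F := F) (i₀ := 0)
    (fun a => sum_nonneg fun k _ => Complex.normSq_nonneg _)
    (fun a ha => sum_normSq_expectation_pauliBlock_le hln (by simp) ψ horth mu heigT ha)
    (by positivity)
  have hcard : (Fintype.card (Fin l → Fin 4) : ℝ) = 2 ^ l * 2 ^ l := by
    simp [← mul_pow]; norm_num
  rw [hF0] at hlower hupper
  rw [hcard, ← mul_div_assoc, ← sub_le_iff_le_add', le_div_iff₀ hn] at hupper
  rw [hpurity]
  constructor
  · field_simp
    linarith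
  · field_simp
    linarith

/-- Average eigenstate purity on the first `l` qubits, for a translationally invariant
Hermitian operator `G` on `n` qubits with common orthonormal eigenbasis `ψ` with `T`:
`1/2^l ≤ 2^{-n} Σ_k Tr(ρ_{k,A}²) ≤ 1/2^l + 2^l/n`. -/
theorem average_purity_translation_invariant (n l : ℕ) (hln : 2 * l < n)
    (G : Matrix (Fin n → Fin 2) (Fin n → Fin 2) ℂ) (hG : G.IsHermitian)
    (hcomm : transOp n * G = G * transOp n)
    (ψ : Fin (2 ^ n) → ((Fin n → Fin 2) → ℂ))
    (horth : ∀ j k, star (ψ j) ⬝ᵥ ψ k = if j = k then 1 else 0)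
    (lam : Fin (2 ^ n) → ℝ) (mu : Fin (2 ^ n) → ℂ)
    (heigG : ∀ k, G *ᵥ ψ k = (lam k : ℂ) • ψ k)
    (heigT : ∀ k, transOp n *ᵥ ψ k = mu k • ψ k) :
    (1 : ℝ) / 2 ^ l ≤
        ((2 : ℝ) ^ n)⁻¹ *
          ∑ k, (Matrix.trace (redDM n l (ψ k) * redDM n l (ψ k))).re ∧
      ((2 : ℝ) ^ n)⁻¹ *
          ∑ k, (Matrix.trace (redDM n l (ψ k) * redDM n l (ψ k))).re ≤
        1 / 2 ^ l + 2 ^ l / n :=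
  average_purity_translation_invariant_general n l hln ψ horth mu heigT
end
end

section
/- Let n be an odd prime, μ_j = sin(2πj/n). Suppose d_1,...,d_n ∈ {−1,0,1} satisfy Σ_j d_j = 0, Σ_j μ_j d_j = 0, and Σ_j μ_j² d_j = 0. Then d_j = 0 for all j. -/
/-!
Put `ζ = exp (2πi/n)` and `S(ω) = ∑ d_j ω^j`, the value at `ω` of a polynomial `Q` with rational
coefficients. The hypotheses say `Im S(ζ) = 0` and, through `cos 2x = 1 - 2 sin² x`,
`Re S(ζ²) = 0`. For a primitive root `ω` we have `conj ω = ω^(n-1)`, so `S(ω)` is real iff `ω` is a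
root of `Q - Q ∘ X^(n-1)`; since all primitive `n`-th roots share the minimal polynomial
`cyclotomic n ℚ`, this passes from `ζ` to `ζ²` (primitive as `n` is odd). Hence `S(ζ²) = 0`.
For prime `n` that minimal polynomial is `1 + X + ⋯ + X^(n-1)`, so all `d_j` are equal, and
`∑ d_j = 0` makes them vanish.
-/

open Finset Real

open Polynomial ComplexConjugate
open scoped Complex
open Complex (I conjAe conj_eq_iff_im inv_eq_conj)

namespace IsPrimitiveRoot

section CharZero

variable {K : Type*} [Field K] [CharZero K] {n : ℕ} {ζ : K}

theorem cyclotomic_dvd_of_aeval_eq_zero (hζ : IsPrimitiveRoot ζ n) (hn : 0 < n) {P : ℚ[X]}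
    (hP : aeval ζ P = 0) : cyclotomic n ℚ ∣ P :=
  cyclotomic_eq_minpoly_rat hζ hn ▸ minpoly.dvd ℚ ζ hP

theorem aeval_eq_zero_of_aeval_eq_zero (hζ : IsPrimitiveRoot ζ n) (hn : 0 < n) {ω : K}
    (hω : IsPrimitiveRoot ω n) {P : ℚ[X]} (hP : aeval ζ P = 0) : aeval ω P = 0 := by
  obtain ⟨Q, rfl⟩ := hζ.cyclotomic_dvd_of_aeval_eq_zero hn hP
  rw [map_mul, cyclotomic_eq_minpoly_rat hω hn, minpoly.aeval, zero_mul]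

theorem coeff_eq_coeff_zero_of_aeval_eq_zero (hζ : IsPrimitiveRoot ζ n) (hn : n.Prime)
    {P : ℚ[X]} (hdeg : P.natDegree < n) (hP : aeval ζ P = 0) {k : ℕ} (hk : k < n) :
    P.coeff k = P.coeff 0 := by
  have := Fact.mk hn
  have hP' := eq_leadingCoeff_mul_of_monic_of_dvd_of_natDegree_le (cyclotomic.monic n ℚ)
    (hζ.cyclotomic_dvd_of_aeval_eq_zero hn.pos hP)
    (by rw [natDegree_cyclotomic, Nat.totient_prime hn]; omega)
  rw [hP', cyclotomic_prime]
  simp [coeff_X_pow, hk, hn.pos]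

theorem eq_of_sum_mul_pow_eq_zero (hζ : IsPrimitiveRoot ζ n) (hn : n.Prime) {c : ℕ → ℚ}
    (h : ∑ k ∈ range n, (c k : K) * ζ ^ k = 0) {k : ℕ} (hk : k < n) : c k = c 0 := by
  set P : ℚ[X] := ∑ k ∈ range n, C (c k) * X ^ k
  have hcoeff : ∀ k < n, P.coeff k = c k := fun k hk => by simp [P, hk]
  have hdeg : P.natDegree ≤ n - 1 := natDegree_sum_le_of_forall_le _ _
    fun k hk => (natDegree_C_mul_X_pow_le _ _).trans (by simp at hk; omega)
  rw [← hcoeff k hk, ← hcoeff 0 hn.pos]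
  exact hζ.coeff_eq_coeff_zero_of_aeval_eq_zero hn (by have := hn.pos; omega)
    (by simpa [P] using h) hk

theorem eq_of_sum_Icc_mul_pow_eq_zero (hζ : IsPrimitiveRoot ζ n) (hn : n.Prime) {c : ℕ → ℚ}
    (h : ∑ j ∈ Icc 1 n, (c j : K) * ζ ^ j = 0) {j : ℕ} (hj : j ∈ Icc 1 n) : c j = c 1 := by
  have hreindex := sum_Ico_add' (fun j => (c j : K) * ζ ^ j) 0 n 1
  rw [zero_add, Ico_add_one_right_eq_Icc, ← range_eq_Ico] at hreindex
  have hshift : ζ * ∑ k ∈ range n, (c (k + 1) : K) * ζ ^ k = 0 := by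
    rw [← h, ← hreindex, mul_sum]
    exact sum_congr rfl fun k _ => by ring
  obtain ⟨k, hk, rfl⟩ : ∃ k < n, k + 1 = j := ⟨j - 1, by grind, by grind⟩
  exact hζ.eq_of_sum_mul_pow_eq_zero hn (c := fun k => c (k + 1))
    ((mul_eq_zero.1 hshift).resolve_left (hζ.ne_zero hn.ne_zero)) hk

end CharZero

variable {n : ℕ} {ζ ω : ℂ}

theorem conj_eq_pow (hω : IsPrimitiveRoot ω n) (hn : n ≠ 0) : conj ω = ω ^ (n - 1) := by
  rw [← inv_eq_conj (hω.norm'_eq_one hn)]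
  exact inv_eq_of_mul_eq_one_right (by rw [mul_pow_sub_one hn, hω.pow_eq_one])

theorem conj_aeval (hω : IsPrimitiveRoot ω n) (hn : n ≠ 0) (P : ℚ[X]) :
    conj (aeval ω P) = aeval ω (P.comp (X ^ (n - 1))) := by
  rw [aeval_comp, map_pow, aeval_X, ← hω.conj_eq_pow hn]
  exact (aeval_algHom_apply (conjAe.toAlgHom.restrictScalars ℚ) ω P).symm

theorem im_aeval_eq_zero_of_im_aeval_eq_zero (hζ : IsPrimitiveRoot ζ n)
    (hω : IsPrimitiveRoot ω n) (hn : n ≠ 0) {P : ℚ[X]} (hP : (aeval ζ P).im = 0) :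
    (aeval ω P).im = 0 := by
  have hζ' : aeval ζ (P - P.comp (X ^ (n - 1))) = 0 := by
    rw [map_sub, ← hζ.conj_aeval hn, conj_eq_iff_im.2 hP, sub_self]
  have hω' := hζ.aeval_eq_zero_of_aeval_eq_zero (Nat.pos_of_ne_zero hn) hω hζ'
  rw [map_sub, ← hω.conj_aeval hn, sub_eq_zero] at hω'
  exact conj_eq_iff_im.1 hω'.symm

end IsPrimitiveRoot

theorem Complex.exp_two_pi_mul_I_div_pow (n m : ℕ) :
    cexp (2 * π * I / n) ^ m = cexp ((2 * π * m / n : ℝ) * I) := by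
  rw [← exp_nat_mul]
  push_cast
  ring_nf

theorem Complex.re_exp_two_pi_mul_I_div_pow (n m : ℕ) :
    (cexp (2 * π * I / n) ^ m).re = Real.cos (2 * π * m / n) := by
  rw [exp_two_pi_mul_I_div_pow, exp_ofReal_mul_I_re]

theorem Complex.im_exp_two_pi_mul_I_div_pow (n m : ℕ) :
    (cexp (2 * π * I / n) ^ m).im = Real.sin (2 * π * m / n) := by
  rw [exp_two_pi_mul_I_div_pow, exp_ofReal_mul_I_im]

theorem Finset.sum_mul_cos_two_mul {ι : Type*} (s : Finset ι) (c x : ι → ℝ) :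
    ∑ i ∈ s, c i * cos (2 * x i) = ∑ i ∈ s, c i - 2 * ∑ i ∈ s, c i * sin (x i) ^ 2 := by
  rw [mul_sum, ← sum_sub_distrib]
  exact sum_congr rfl fun i _ => by rw [cos_two_mul, cos_sq']; ring

theorem eigenvalue_difference_coefficients_vanish_general (n : ℕ) (hp : n.Prime) (hodd : Odd n)
    (d : ℕ → ℤ)
    (h0 : ∑ j ∈ Finset.Icc 1 n, d j = 0)
    (h1 : ∑ j ∈ Finset.Icc 1 n, (d j : ℝ) * Real.sin (2 * Real.pi * j / n) = 0)
    (h2 : ∑ j ∈ Finset.Icc 1 n, (d j : ℝ) * Real.sin (2 * Real.pi * j / n) ^ 2 = 0) :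
    ∀ j ∈ Finset.Icc 1 n, d j = 0 := by
  set ζ : ℂ := cexp (2 * π * I / n)
  have hζ : IsPrimitiveRoot ζ n := Complex.isPrimitiveRoot_exp n hp.ne_zero
  have hζ2 : IsPrimitiveRoot (ζ ^ 2) n := hζ.pow_of_coprime 2 (Nat.coprime_two_left.2 hodd)
  set Q : ℚ[X] := ∑ j ∈ Icc 1 n, C (d j : ℚ) * X ^ j
  have hQ (ω : ℂ) : aeval ω Q = ∑ j ∈ Icc 1 n, (d j : ℂ) * ω ^ j := by simp [Q]
  have him : (aeval (ζ ^ 2) Q).im = 0 := by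
    refine hζ.im_aeval_eq_zero_of_im_aeval_eq_zero hζ2 hp.ne_zero ?_
    simpa only [hQ, ζ, Complex.im_sum, Complex.mul_im, Complex.intCast_re, Complex.intCast_im,
      zero_mul, add_zero, Complex.im_exp_two_pi_mul_I_div_pow] using h1
  have hre : (aeval (ζ ^ 2) Q).re = 0 := by
    have harg (j : ℕ) : 2 * π * ↑(2 * j) / n = 2 * (2 * π * j / n) := by push_cast; ring
    simp only [hQ, ζ, ← pow_mul, Complex.re_sum, Complex.mul_re, Complex.intCast_re,
      Complex.intCast_im, zero_mul, sub_zero, Complex.re_exp_two_pi_mul_I_div_pow, harg,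
      sum_mul_cos_two_mul, h2, mul_zero]
    exact_mod_cast h0
  have hconst (j : ℕ) (hj : j ∈ Icc 1 n) : d j = d 1 := by
    have hQ0 : aeval (ζ ^ 2) Q = 0 := Complex.ext hre him
    exact_mod_cast hζ2.eq_of_sum_Icc_mul_pow_eq_zero hp (c := fun j => (d j : ℚ))
      (by simpa [hQ] using hQ0) hj
  rw [sum_congr rfl hconst, sum_const, Nat.card_Icc, Nat.add_sub_cancel, nsmul_eq_mul] at h0
  intro j hj
  rw [hconst j hj]
  simpa [hp.ne_zero] using h0

/-- Key non-degeneracy step: for an odd prime `n` and `μ_j = sin(2πj/n)`, if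
`d_j ∈ {-1,0,1}` satisfy `Σ d_j = 0`, `Σ μ_j d_j = 0` and `Σ μ_j² d_j = 0`,
then all `d_j = 0`. -/
theorem eigenvalue_difference_coefficients_vanish (n : ℕ) (hp : n.Prime) (hodd : Odd n)
    (d : ℕ → ℤ) (hd : ∀ j ∈ Finset.Icc 1 n, d j = -1 ∨ d j = 0 ∨ d j = 1)
    (h0 : ∑ j ∈ Finset.Icc 1 n, d j = 0)
    (h1 : ∑ j ∈ Finset.Icc 1 n, (d j : ℝ) * Real.sin (2 * Real.pi * j / n) = 0)
    (h2 : ∑ j ∈ Finset.Icc 1 n, (d j : ℝ) * Real.sin (2 * Real.pi * j / n) ^ 2 = 0) :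
    ∀ j ∈ Finset.Icc 1 n, d j = 0 :=
  eigenvalue_difference_coefficients_vanish_general n hp hodd d h0 h1 h2
end

section
/- Let H = Σ_{j=1}^n Σ_{a,b=1}^3 α_{a,b,j} σ_j^(a) σ_{j+1}^(b) (real coefficients, cyclic indices, no single-site terms) be a Hermitian operator on (C²)^⊗n with non-degenerate spectrum, and let |ψ⟩ be any eigenvector. Then ⟨ψ|σ_1^(a)|ψ⟩ = 0 for a = 1,2,3, and hence the reduced density matrix of |ψ⟩ on qubit 1 equals I/2, so its purity is exactly 1/2. -/
open Matrix Finset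
noncomputable section

/-!
Let `S = (σ^(2))^⊗n`. Since `σ^(2) σ^(a) σ^(2) = -conj σ^(a)` for `a = 1, 2, 3`, conjugation by `S`
sends every single-site Pauli matrix `σ_j^(a)` to `-conj σ_j^(a)`, hence every two-site term, and so
`H`, to its complex conjugate. Therefore `ψ ↦ S ψ̄` maps the real eigenvalue's eigenspace into itself,
and non-degeneracy gives `S ψ̄ = c ψ`. Computing `⟨Sψ̄|σ_1^(a)|Sψ̄⟩` once as `|c|² ⟨ψ|σ_1^(a)|ψ⟩` and
once as `-⟨ψ|σ_1^(a)|ψ⟩` shows that the expectation vanishes. Finally the one-qubit reduced density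
matrix is `ρ = ½ Σ_a tr(σ^(a) ρ) σ^(a)` with `tr(σ^(a) ρ) = ⟨ψ|σ_1^(a)|ψ⟩`, which is `1` for `a = 0`
and `0` otherwise, so `ρ = I/2`.
-/

namespace Matrix

variable {ι α R : Type*} [Fintype ι] [CommSemiring R]

def kroneckerPi (A : ι → Matrix α α R) : Matrix (ι → α) (ι → α) R :=
  fun x y => ∏ i, A i (x i) (y i)

theorem kroneckerPi_mul [Fintype α] [DecidableEq ι] (A B : ι → Matrix α α R) :
    kroneckerPi A * kroneckerPi B = kroneckerPi (fun i => A i * B i) := by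
  ext x y
  simp only [kroneckerPi, mul_apply, Fintype.prod_sum, ← Finset.prod_mul_distrib]

theorem kroneckerPi_one [DecidableEq α] :
    kroneckerPi (fun _ : ι => (1 : Matrix α α R)) = 1 := by
  ext x y
  simp only [kroneckerPi, one_apply, Finset.prod_boole, Finset.mem_univ, true_implies,
    funext_iff]

theorem kroneckerPi_smul (c : ι → R) (A : ι → Matrix α α R) :
    kroneckerPi (fun i => c i • A i) = (∏ i, c i) • kroneckerPi A := by
  ext x y
  simp only [kroneckerPi, Matrix.smul_apply, smul_eq_mul, Finset.prod_mul_distrib]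

theorem kroneckerPi_map {S : Type*} [CommSemiring S] (f : R →+* S) (A : ι → Matrix α α R) :
    (kroneckerPi A).map f = kroneckerPi (fun i => (A i).map f) := by
  ext x y
  simp only [kroneckerPi, map_apply, map_prod]

theorem IsHermitian.kroneckerPi [StarRing R] {A : ι → Matrix α α R}
    (hA : ∀ i, (A i).IsHermitian) : (kroneckerPi A).IsHermitian := by
  ext x y
  change star (∏ i, A i (y i) (x i)) = ∏ i, A i (x i) (y i)
  rw [← starRingEnd_apply, map_prod]
  exact Finset.prod_congr rfl fun i _ => by
    rw [starRingEnd_apply, ← conjTranspose_apply, (hA i).eq]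

theorem kroneckerPi_cons {m : ℕ} (A : Fin (m + 1) → Matrix α α R) (s t : α)
    (x y : Fin m → α) :
    kroneckerPi A (Fin.cons s x) (Fin.cons t y) =
      A 0 s t * kroneckerPi (fun i => A i.succ) x y :=
  Fin.prod_univ_succ _

end Matrix

theorem isHermitian_pauli (a : Fin 4) : (pauli a).IsHermitian := by
  ext i j
  fin_cases a <;> fin_cases i <;> fin_cases j <;> simp [pauli]

theorem pauli_two_mul_self : pauli 2 * pauli 2 = 1 := by
  ext i j
  fin_cases i <;> fin_cases j <;> simp [pauli, mul_apply, Fin.sum_univ_two]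

theorem pauli_two_mul_pauli_mul_pauli_two (a : Fin 3) :
    pauli 2 * pauli a.succ * pauli 2 = -(pauli a.succ).map (starRingEnd ℂ) := by
  ext i j
  fin_cases a <;> fin_cases i <;> fin_cases j <;> simp [pauli, mul_apply, Fin.sum_univ_two]

theorem pauli_expansion (ρ : Matrix (Fin 2) (Fin 2) ℂ) :
    ρ = (2 : ℂ)⁻¹ • ∑ a, trace (pauli a * ρ) • pauli a := by
  ext i j
  fin_cases i <;> fin_cases j <;>
    simp [trace, mul_apply, Fin.sum_univ_two, Fin.sum_univ_four, pauli]
  · ring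
  · linear_combination (ρ 0 1 - ρ 1 0) / 2 * Complex.I_sq
  · linear_combination (ρ 1 0 - ρ 0 1) / 2 * Complex.I_sq
  · ring

theorem pauliAt_eq_kroneckerPi (n : ℕ) (j : Fin n) (a : Fin 4) :
    pauliAt n j a = kroneckerPi (Pi.mulSingle j (pauli a)) := by
  ext x y
  refine Finset.prod_congr rfl fun i _ => ?_
  by_cases h : i = j
  · subst h; simp
  · simp [h, one_apply]

theorem isHermitian_pauliAt (n : ℕ) (j : Fin n) (a : Fin 4) : (pauliAt n j a).IsHermitian := by
  rw [pauliAt_eq_kroneckerPi]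
  refine IsHermitian.kroneckerPi fun i => ?_
  by_cases h : i = j
  · subst h; simpa using isHermitian_pauli a
  · simp [h]

theorem pauliTensor_eq_kroneckerPi (l : ℕ) (a : Fin l → Fin 4) :
    pauliTensor l a = kroneckerPi (fun i => pauli (a i)) :=
  rfl

theorem pauliTensor_two_mul_self (n : ℕ) :
    pauliTensor n (fun _ => 2) * pauliTensor n (fun _ => 2) = 1 := by
  rw [pauliTensor_eq_kroneckerPi, kroneckerPi_mul, pauli_two_mul_self, kroneckerPi_one]

theorem isHermitian_pauliTensor (l : ℕ) (a : Fin l → Fin 4) : (pauliTensor l a).IsHermitian :=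
  IsHermitian.kroneckerPi fun i => isHermitian_pauli (a i)

theorem pauliTensor_two_mul_pauliAt_mul_pauliTensor_two (n : ℕ) (j : Fin n) (a : Fin 3) :
    pauliTensor n (fun _ => 2) * pauliAt n j a.succ * pauliTensor n (fun _ => 2) =
      -(pauliAt n j a.succ).map (starRingEnd ℂ) := by
  have hsite : ∀ i : Fin n,
      pauli 2 * (Pi.mulSingle j (pauli a.succ) : Fin n → Matrix _ _ ℂ) i * pauli 2 =
      (Pi.mulSingle j (-1) : Fin n → ℂ) i •
        (Pi.mulSingle j ((pauli a.succ).map (starRingEnd ℂ)) : Fin n → Matrix _ _ ℂ) i := by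
    intro i
    by_cases h : i = j
    · subst h; simp [pauli_two_mul_pauli_mul_pauli_two]
    · simp [h, pauli_two_mul_self]
  rw [pauliAt_eq_kroneckerPi, pauliTensor_eq_kroneckerPi, kroneckerPi_mul, kroneckerPi_mul,
    funext hsite, kroneckerPi_smul, Fintype.prod_pi_mulSingle', kroneckerPi_map, neg_one_smul]
  congr 2
  funext i
  by_cases h : i = j
  · subst h; simp
  · simp [h]

def chainHamiltonian (n : ℕ) (α : Fin n → Fin 3 → Fin 3 → ℝ) :
    Matrix (Fin n → Fin 2) (Fin n → Fin 2) ℂ :=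
  ∑ j, ∑ a : Fin 3, ∑ b : Fin 3,
    (α j a b : ℂ) • (pauliAt n j a.succ * pauliAt n (cycSucc j) b.succ)

theorem pauliTensor_two_mul_chainHamiltonian_mul_pauliTensor_two (n : ℕ)
    (α : Fin n → Fin 3 → Fin 3 → ℝ) :
    pauliTensor n (fun _ => 2) * chainHamiltonian n α * pauliTensor n (fun _ => 2) =
      (chainHamiltonian n α).map (starRingEnd ℂ) := by
  set S := pauliTensor n (fun _ => 2)
  have hbond : ∀ (j k : Fin n) (a b : Fin 3),
      S * (pauliAt n j a.succ * pauliAt n k b.succ) * S =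
        (pauliAt n j a.succ * pauliAt n k b.succ).map (starRingEnd ℂ) := by
    intro j k a b
    calc S * (pauliAt n j a.succ * pauliAt n k b.succ) * S
        = S * pauliAt n j a.succ * (S * S) * pauliAt n k b.succ * S := by
          rw [pauliTensor_two_mul_self, Matrix.mul_one]
          simp only [Matrix.mul_assoc]
      _ = (S * pauliAt n j a.succ * S) * (S * pauliAt n k b.succ * S) := by
          simp only [Matrix.mul_assoc]
      _ = _ := by
          rw [pauliTensor_two_mul_pauliAt_mul_pauliTensor_two,
            pauliTensor_two_mul_pauliAt_mul_pauliTensor_two, neg_mul_neg, Matrix.map_mul]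
  simp only [chainHamiltonian, Matrix.sum_mul, Matrix.mul_sum, Matrix.smul_mul,
    Matrix.mul_smul, hbond]
  ext x y
  simp only [Matrix.sum_apply, Matrix.smul_apply, Matrix.map_apply, smul_eq_mul, map_sum,
    map_mul, Complex.conj_ofReal]

theorem Matrix.exists_smul_eq_of_charpoly_roots_nodup {K m : Type*} [Field K] [Fintype m]
    [DecidableEq m] {M : Matrix m m K} (hM : M.charpoly.roots.Nodup) {μ : K} {ψ φ : m → K}
    (hψ : M *ᵥ ψ = μ • ψ) (hφ : M *ᵥ φ = μ • φ) (hψ0 : ψ ≠ 0) : ∃ c : K, φ = c • ψ := by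
  classical
  set E := Module.End.eigenspace (toLin' M) μ
  have hE : Module.finrank K E ≤ 1 := by
    refine (LinearMap.finrank_eigenspace_le _ μ).trans ?_
    rw [charpoly_toLin', ← Polynomial.count_roots]
    exact Multiset.nodup_iff_count_le_one.mp hM μ
  have hspan : K ∙ ψ = E :=
    Submodule.eq_of_le_of_finrank_le
      ((Submodule.span_singleton_le_iff_mem _ _).mpr (Module.End.mem_eigenspace_iff.mpr hψ))
      (by rwa [finrank_span_singleton hψ0])
  obtain ⟨c, hc⟩ := Submodule.mem_span_singleton.mp
    (hspan ▸ Module.End.mem_eigenspace_iff.mpr hφ : φ ∈ K ∙ ψ)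
  exact ⟨c, hc.symm⟩

section Antiunitary

variable {m : Type*} [Fintype m] {S : Matrix m m ℂ} {ψ : m → ℂ}

theorem mulVec_mulVec_star_eq_smul [DecidableEq m] {M : Matrix m m ℂ} (hS : S * S = 1)
    (hM : S * M * S = M.map (starRingEnd ℂ)) {μ : ℝ} (hψ : M *ᵥ ψ = (μ : ℂ) • ψ) :
    M *ᵥ (S *ᵥ star ψ) = (μ : ℂ) • (S *ᵥ star ψ) := by
  have hconj : M.map (starRingEnd ℂ) *ᵥ star ψ = star (M *ᵥ ψ) :=
    funext fun i => (RingHom.map_mulVec _ M ψ i).symm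
  calc M *ᵥ (S *ᵥ star ψ) = S *ᵥ ((S * M * S) *ᵥ star ψ) := by
        rw [mulVec_mulVec, mulVec_mulVec, ← Matrix.mul_assoc, ← Matrix.mul_assoc, hS,
          Matrix.one_mul]
    _ = S *ᵥ star ((μ : ℂ) • ψ) := by rw [hM, hconj, hψ]
    _ = (μ : ℂ) • (S *ᵥ star ψ) := by
        rw [star_smul, Complex.star_def, Complex.conj_ofReal, mulVec_smul]

theorem dotProduct_mulVec_eq_zero_of_mulVec_star_eq_smul {A : Matrix m m ℂ}
    (hS : S.IsHermitian) (hA : A.IsHermitian) (hSA : S * A * S = -A.map (starRingEnd ℂ))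
    {c : ℂ} (hc : S *ᵥ star ψ = c • ψ) : star ψ ⬝ᵥ (A *ᵥ ψ) = 0 := by
  set e := star ψ ⬝ᵥ (A *ᵥ ψ)
  have hflip : star (S *ᵥ star ψ) ⬝ᵥ (A *ᵥ (S *ᵥ star ψ)) = -e := by
    have hconj : A.map (starRingEnd ℂ) *ᵥ star ψ = star (A *ᵥ ψ) :=
      funext fun i => (RingHom.map_mulVec _ A ψ i).symm
    rw [star_mulVec, star_star, hS.eq, ← dotProduct_mulVec, mulVec_mulVec, mulVec_mulVec,
      hSA, neg_mulVec, dotProduct_neg, hconj, dotProduct_comm,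
      star_mulVec, ← dotProduct_mulVec, hA.eq]
  have hscale : star (S *ᵥ star ψ) ⬝ᵥ (A *ᵥ (S *ᵥ star ψ)) = (star c * c) * e := by
    rw [hc, star_smul, mulVec_smul, smul_dotProduct, dotProduct_smul, smul_smul, smul_eq_mul]
  have hpos : star c * c + 1 ≠ 0 := by
    rw [Complex.star_def, ← Complex.normSq_eq_conj_mul_self]
    exact_mod_cast (Complex.normSq_nonneg c).trans_lt (lt_add_one _) |>.ne'
  exact (mul_eq_zero.mp (by linear_combination hscale.symm.trans hflip)).resolve_left hpos

end Antiunitary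

section FirstQubit

variable {m : ℕ}

def firstQubitDM (ψ : (Fin (m + 1) → Fin 2) → ℂ) : Matrix (Fin 2) (Fin 2) ℂ :=
  fun s t => ∑ w : Fin m → Fin 2, ψ (Fin.cons s w) * starRingEnd ℂ (ψ (Fin.cons t w))

theorem glue_one (u : Fin 1 → Fin 2) (w : Fin m → Fin 2) :
    glue (m + 1) 1 u w = Fin.cons (u 0) w := by
  ext i
  refine Fin.cases ?_ (fun i => ?_) i
  · rfl
  · simp [glue]

theorem redDM_one_eq_submatrix (ψ : (Fin (m + 1) → Fin 2) → ℂ) :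
    redDM (m + 1) 1 ψ = (firstQubitDM ψ).submatrix (fun u => u 0) (fun u => u 0) := by
  ext u v
  simp only [redDM, glue_one, submatrix_apply, firstQubitDM]
  rfl

theorem pauliAt_zero_cons (a : Fin 4) (s t : Fin 2) (w w' : Fin m → Fin 2) :
    pauliAt (m + 1) 0 a (Fin.cons s w) (Fin.cons t w') =
      pauli a s t * (1 : Matrix _ _ ℂ) w w' := by
  rw [pauliAt_eq_kroneckerPi, kroneckerPi_cons]
  simp only [Pi.mulSingle_eq_same]
  congr 2
  simp [Fin.succ_ne_zero, kroneckerPi_one]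

theorem trace_pauli_mul_firstQubitDM (a : Fin 4) (ψ : (Fin (m + 1) → Fin 2) → ℂ) :
    trace (pauli a * firstQubitDM ψ) = star ψ ⬝ᵥ (pauliAt (m + 1) 0 a *ᵥ ψ) := by
  symm
  calc star ψ ⬝ᵥ (pauliAt (m + 1) 0 a *ᵥ ψ)
      = ∑ s, ∑ w, star (ψ (Fin.cons s w)) * ∑ t, ∑ w',
          pauliAt (m + 1) 0 a (Fin.cons s w) (Fin.cons t w') * ψ (Fin.cons t w') := by
        simp only [dotProduct, mulVec, ← (Fin.consEquiv _).sum_comp, Fintype.sum_prod_type]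
        rfl
    _ = trace (pauli a * firstQubitDM ψ) := by
        simp only [RCLike.star_def, pauliAt_zero_cons, one_apply, mul_ite, mul_one, mul_zero,
          ite_mul, zero_mul, Finset.sum_ite_eq, Finset.mem_univ, if_true, Fin.sum_univ_two,
          trace, diag_apply, mul_apply, firstQubitDM, Finset.mul_sum]
        simp only [← Finset.sum_add_distrib]
        exact Finset.sum_congr rfl fun w _ => by ring

theorem redDM_one_eq_half {ψ : (Fin (m + 1) → Fin 2) → ℂ} (hψ : star ψ ⬝ᵥ ψ = 1)
    (h : ∀ a : Fin 3, star ψ ⬝ᵥ (pauliAt (m + 1) 0 a.succ *ᵥ ψ) = 0) :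
    redDM (m + 1) 1 ψ = (2 : ℂ)⁻¹ • 1 := by
  have htrace : ∀ a, trace (pauli a * firstQubitDM ψ) = if a = 0 then 1 else 0 := by
    intro a
    rw [trace_pauli_mul_firstQubitDM]
    refine Fin.cases ?_ (fun a => ?_) a
    · have hid : pauliAt (m + 1) 0 0 = 1 := by
        rw [pauliAt_eq_kroneckerPi, show pauli 0 = 1 from rfl, Pi.mulSingle_one]
        exact kroneckerPi_one
      rw [hid, one_mulVec, hψ, if_pos rfl]
    · rw [h a, if_neg (Fin.succ_ne_zero a)]
  rw [redDM_one_eq_submatrix, pauli_expansion (firstQubitDM ψ)]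
  simp only [htrace, ite_smul, one_smul, zero_smul, Finset.sum_ite_eq', Finset.mem_univ, if_true]
  rw [submatrix_smul, Pi.smul_apply, Pi.smul_apply, show pauli 0 = 1 from rfl,
    submatrix_one (fun u : Fin 1 → Fin 2 => u 0) (Equiv.funUnique (Fin 1) (Fin 2)).injective]

end FirstQubit

/-- For a nearest-neighbour Hamiltonian `H = Σ_j Σ_{a,b=1}^3 α_{a,b,j} σ_j^(a) σ_{j+1}^(b)`
(no single-site terms) with non-degenerate spectrum, every normalized eigenvector `ψ`
satisfies `⟨ψ|σ_1^(a)|ψ⟩ = 0` for `a = 1,2,3`, its reduced density matrix on qubit 1 is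
`I/2`, and its purity is exactly `1/2`. -/
theorem eigenstate_purity_one_qubit (n : ℕ) (hn : 0 < n)
    (α : Fin n → Fin 3 → Fin 3 → ℝ)
    (hnd : (((∑ j, ∑ a : Fin 3, ∑ b : Fin 3,
        (α j a b : ℂ) • (pauliAt n j a.succ * pauliAt n (cycSucc j) b.succ)) :
        Matrix (Fin n → Fin 2) (Fin n → Fin 2) ℂ).charpoly.roots).Nodup)
    (ψ : (Fin n → Fin 2) → ℂ) (hψ : star ψ ⬝ᵥ ψ = 1) (μ : ℝ)
    (heig : (∑ j, ∑ a : Fin 3, ∑ b : Fin 3,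
        (α j a b : ℂ) • (pauliAt n j a.succ * pauliAt n (cycSucc j) b.succ)) *ᵥ ψ =
      (μ : ℂ) • ψ) :
    (∀ a : Fin 3, star ψ ⬝ᵥ (pauliAt n ⟨0, hn⟩ a.succ *ᵥ ψ) = 0) ∧
      redDM n 1 ψ = ((2 : ℂ))⁻¹ • 1 ∧
      (Matrix.trace (redDM n 1 ψ * redDM n 1 ψ)).re = 1 / 2 := by
  obtain ⟨m, rfl⟩ := Nat.exists_eq_add_one_of_ne_zero hn.ne'
  have hψ0 : ψ ≠ 0 := by
    rintro rfl
    simp at hψ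
  obtain ⟨c, hc⟩ := exists_smul_eq_of_charpoly_roots_nodup hnd heig
    (mulVec_mulVec_star_eq_smul (pauliTensor_two_mul_self _)
      (pauliTensor_two_mul_chainHamiltonian_mul_pauliTensor_two _ α) heig) hψ0
  have hexp : ∀ a : Fin 3, star ψ ⬝ᵥ (pauliAt (m + 1) ⟨0, hn⟩ a.succ *ᵥ ψ) = 0 := fun a =>
    dotProduct_mulVec_eq_zero_of_mulVec_star_eq_smul (isHermitian_pauliTensor _ _)
      (isHermitian_pauliAt _ _ _) (pauliTensor_two_mul_pauliAt_mul_pauliTensor_two _ _ a) hc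
  have hρ := redDM_one_eq_half hψ hexp
  refine ⟨hexp, hρ, ?_⟩
  rw [hρ]
  norm_num [trace_smul, Matrix.smul_mul, Matrix.mul_smul, smul_smul]
end
end
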